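/- Let M, a ∈ ℝ with 0 < |a| < M. Define the tortoise coordinate r* : (r₋, r₊) → ℝ by r*(r) = ∫_M^r (x²+a²)/Δ(x) dx, and the Cauchy-horizon surface gravity κ₋ = (r₋ − r₊)/(4M·r₋) < 0. Then there exists L ∈ ℝ such that r*(r) − (1/(2κ₋))·ln(r − r₋) tends to L as r → r₋ from the right; in particular r*(r) → +∞ as r → r₋⁺. -/

import Mathlib

/-!
Factoring `Δ(x) = (x - r₋)(x - r₊)` and decomposing into partial fractions gives
`(x² + a²)/Δ(x) = 1 + (2κ₋)⁻¹/(x - r₋) + (2κ₊)⁻¹/(x - r₊)` with `κ₊ = (r₊ - r₋)/(4Mr₊)`,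
so on `(r₋, r₊)` the tortoise coordinate is, up to an additive constant,
`r + (2κ₋)⁻¹ log (r - r₋) + (2κ₊)⁻¹ log (r₊ - r)`. The last term is continuous at `r₋`,
and `(2κ₋)⁻¹ log (r - r₋) → +∞` because `κ₋ < 0`.
-/

noncomputable section

open Filter

/-- `Δ(r) = r² − 2Mr + a²`. -/
def Δk (M a r : ℝ) : ℝ := r^2 - 2*M*r + a^2

/-- The larger root `r₊ = M + √(M²−a²)` of `Δ` (event horizon radius). -/
def rpK (M a : ℝ) : ℝ := M + Real.sqrt (M^2 - a^2)

/-- The smaller root `r₋ = M − √(M²−a²)` of `Δ` (Cauchy horizon radius). -/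
def rmK (M a : ℝ) : ℝ := M - Real.sqrt (M^2 - a^2)

/-- The tortoise coordinate `r*(r) = ∫_M^r (x²+a²)/Δ(x) dx`. -/
def rstar (M a : ℝ) (r : ℝ) : ℝ := ∫ x in M..r, (x^2 + a^2)/Δk M a x

/-- The Cauchy-horizon surface gravity `κ₋ = (r₋ − r₊)/(4Mr₋)`. -/
def κm (M a : ℝ) : ℝ := (rmK M a - rpK M a)/(4*M*rmK M a)

open Real Set Topology

section TwoPoles

variable {p q A B : ℝ}

def twoPolePrimitive (p q A B x : ℝ) : ℝ := x + A * log (x - p) + B * log (q - x)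

theorem hasDerivAt_twoPolePrimitive {x : ℝ} (hx : x ∈ Ioo p q) :
    HasDerivAt (twoPolePrimitive p q A B) (1 + A / (x - p) + B / (x - q)) x := by
  have hxp : x - p ≠ 0 := sub_ne_zero.mpr hx.1.ne'
  have hqx : q - x ≠ 0 := sub_ne_zero.mpr hx.2.ne'
  have hlog_p := ((hasDerivAt_id x).sub_const p).log hxp
  have hlog_q := ((hasDerivAt_id x).const_sub q).log hqx
  refine (((hasDerivAt_id x).add (hlog_p.const_mul A)).add (hlog_q.const_mul B)).congr_deriv ?_
  rw [show x - q = -(q - x) by ring]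
  simp only [id, div_neg]
  ring

theorem integral_twoPole {c r : ℝ} (hc : c ∈ Ioo p q) (hr : r ∈ Ioo p q) :
    ∫ x in c..r, (1 + A / (x - p) + B / (x - q)) =
      twoPolePrimitive p q A B r - twoPolePrimitive p q A B c := by
  have hsub : uIcc c r ⊆ Ioo p q := ordConnected_Ioo.uIcc_subset hc hr
  refine intervalIntegral.integral_eq_sub_of_hasDerivAt
    (fun x hx => hasDerivAt_twoPolePrimitive (hsub hx)) (ContinuousOn.intervalIntegrable ?_)
  refine ContinuousOn.add (ContinuousOn.add continuousOn_const ?_) ?_ <;>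
    refine continuousOn_const.div (by fun_prop) fun x hx => sub_ne_zero.mpr ?_
  exacts [(hsub hx).1.ne', (hsub hx).2.ne]

theorem tendsto_twoPolePrimitive_sub_log (hpq : p < q) :
    Tendsto (fun r => twoPolePrimitive p q A B r - A * log (r - p)) (𝓝[>] p)
      (𝓝 (p + B * log (q - p))) := by
  have hcont : ContinuousAt (fun r => r + B * log (q - r)) p :=
    continuousAt_id.add (continuousAt_const.mul
      ((continuousAt_const.sub continuousAt_id).log (sub_ne_zero.mpr hpq.ne')))
  refine (hcont.tendsto.mono_left nhdsWithin_le_nhds).congr fun r => ?_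
  simp only [twoPolePrimitive]
  ring

end TwoPoles

theorem tendsto_log_sub_nhdsGT (p : ℝ) : Tendsto (fun r => log (r - p)) (𝓝[>] p) atBot := by
  refine tendsto_log_nhdsGT_zero.comp (tendsto_nhdsWithin_of_tendsto_nhds_of_eventually_within _
    ?_ (eventually_nhdsWithin_of_forall fun _ hr => mem_Ioi.mpr (sub_pos.mpr hr)))
  simpa using ((continuous_sub_right p).tendsto p).mono_left nhdsWithin_le_nhds

section Kerr

variable {M a : ℝ}

/-- The surface gravity `κ₊` of the event horizon. -/
def κp (M a : ℝ) : ℝ := (rpK M a - rmK M a) / (4 * M * rpK M a)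

theorem sqrt_sq_sub_sq_pos (haM : |a| < M) : 0 < √(M ^ 2 - a ^ 2) := by
  have : a ^ 2 < M ^ 2 := by simpa using sq_lt_sq' (neg_lt_of_abs_lt haM) (lt_of_abs_lt haM)
  exact sqrt_pos.mpr (by linarith)

theorem sqrt_sq_sub_sq_lt (ha : 0 < |a|) (haM : |a| < M) : √(M ^ 2 - a ^ 2) < M := by
  have hM : 0 < M := ha.trans haM
  rw [sqrt_lt' hM]
  nlinarith [sq_abs a, mul_pos ha ha]

theorem rmK_pos (ha : 0 < |a|) (haM : |a| < M) : 0 < rmK M a :=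
  sub_pos.mpr (sqrt_sq_sub_sq_lt ha haM)

theorem rmK_lt_self (haM : |a| < M) : rmK M a < M :=
  sub_lt_self M (sqrt_sq_sub_sq_pos haM)

theorem self_lt_rpK (haM : |a| < M) : M < rpK M a :=
  lt_add_of_pos_right M (sqrt_sq_sub_sq_pos haM)

theorem Δk_eq_mul (haM : |a| ≤ M) (x : ℝ) : Δk M a x = (x - rmK M a) * (x - rpK M a) := by
  have hsq : √(M ^ 2 - a ^ 2) ^ 2 = M ^ 2 - a ^ 2 :=
    sq_sqrt (sub_nonneg.mpr (by simpa using sq_le_sq' (neg_le_of_abs_le haM) (le_of_abs_le haM)))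
  simp only [Δk, rmK, rpK]
  linear_combination hsq

theorem κm_neg (ha : 0 < |a|) (haM : |a| < M) : κm M a < 0 :=
  div_neg_of_neg_of_pos (by linarith [rmK_lt_self haM, self_lt_rpK haM])
    (by have := rmK_pos ha haM; have := ha.trans haM; positivity)

theorem div_Δk_eq_partialFractions (ha : 0 < |a|) (haM : |a| < M) {x : ℝ}
    (hxm : x ≠ rmK M a) (hxp : x ≠ rpK M a) :
    (x ^ 2 + a ^ 2) / Δk M a x =
      1 + (1 / (2 * κm M a)) / (x - rmK M a) + (1 / (2 * κp M a)) / (x - rpK M a) := by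
  have hM : 0 < M := ha.trans haM
  have hrm := rmK_pos ha haM
  have hrp : 0 < rpK M a := hM.trans (self_lt_rpK haM)
  have hxm' : x - rmK M a ≠ 0 := sub_ne_zero.mpr hxm
  have hxp' : x - rpK M a ≠ 0 := sub_ne_zero.mpr hxp
  have hs := sqrt_sq_sub_sq_pos haM
  have hsq : √(M ^ 2 - a ^ 2) ^ 2 = M ^ 2 - a ^ 2 := sq_sqrt (sqrt_pos.mp hs).le
  rw [Δk_eq_mul haM.le, κm, κp]
  simp only [rmK, rpK] at *
  set s := √(M ^ 2 - a ^ 2)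
  rw [show M - s - (M + s) = -(2 * s) by ring, show M + s - (M - s) = 2 * s by ring]
  field_simp
  linear_combination 4 * s * hsq

theorem rstar_eq_twoPolePrimitive (ha : 0 < |a|) (haM : |a| < M) {r : ℝ}
    (hr : r ∈ Ioo (rmK M a) (rpK M a)) :
    rstar M a r =
      twoPolePrimitive (rmK M a) (rpK M a) (1 / (2 * κm M a)) (1 / (2 * κp M a)) r -
        twoPolePrimitive (rmK M a) (rpK M a) (1 / (2 * κm M a)) (1 / (2 * κp M a)) M := by
  have hM : M ∈ Ioo (rmK M a) (rpK M a) := ⟨rmK_lt_self haM, self_lt_rpK haM⟩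
  rw [rstar, ← integral_twoPole hM hr]
  refine intervalIntegral.integral_congr fun x hx => ?_
  have hx' := ordConnected_Ioo.uIcc_subset hM hr hx
  exact div_Δk_eq_partialFractions ha haM hx'.1.ne' hx'.2.ne

end Kerr

/-- **Asymptotics of the tortoise coordinate at the Cauchy horizon:**
`r*(r) = (1/(2κ₋))·ln(r − r₋) + O(1)` as `r → r₋⁺`; in particular `r* → +∞`. -/
theorem stmt_18 (M a : ℝ) (ha : 0 < |a|) (haM : |a| < M) :
    (∃ L : ℝ, Tendsto
        (fun r => rstar M a r - (1/(2 * κm M a)) * Real.log (r - rmK M a))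
        (nhdsWithin (rmK M a) (Set.Ioi (rmK M a))) (nhds L)) ∧
    Tendsto (rstar M a) (nhdsWithin (rmK M a) (Set.Ioi (rmK M a))) atTop := by
  set F := twoPolePrimitive (rmK M a) (rpK M a) (1 / (2 * κm M a)) (1 / (2 * κp M a))
  have hrmrp : rmK M a < rpK M a := (rmK_lt_self haM).trans (self_lt_rpK haM)
  have hlim : Tendsto (fun r => rstar M a r - 1 / (2 * κm M a) * log (r - rmK M a))
      (𝓝[>] rmK M a)
      (𝓝 (rmK M a + 1 / (2 * κp M a) * log (rpK M a - rmK M a) - F M)) := by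
    refine ((tendsto_twoPolePrimitive_sub_log (A := 1 / (2 * κm M a)) hrmrp).sub_const
      (F M)).congr' ?_
    filter_upwards [Ioo_mem_nhdsGT hrmrp] with r hr
    rw [rstar_eq_twoPolePrimitive ha haM hr]
    ring
  refine ⟨⟨_, hlim⟩, ?_⟩
  have hA : 1 / (2 * κm M a) < 0 := one_div_neg.mpr (by linarith [κm_neg ha haM])
  have hlog := (tendsto_const_mul_atTop_of_neg hA).mpr (tendsto_log_sub_nhdsGT (rmK M a))
  simpa using hlim.add_atTop hlog
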